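/- Fix M ∈ {2,3,4,6}, h = h_M, a real number φ, and let G = U(1)⋉_φ(ℤ²⋊ℤ_M) be the magnetic space group. Represent each U(1)-component by its representative z ∈ [0,1), and define f_v(g₁,g₂) = z₁ + z₂ + (φ/2)(r₁ × h^{j₁} r₂) − z₁₂, where z₁₂ ∈ [0,1) is the representative of the U(1)-component of g₁g₂. Then (i) f_v takes values in ℤ and is a 2-cocycle on G with coefficients in ℤ (trivial action), and (ii) for every nonzero integer n there is no function χ : G → ℤ whose coboundary equals n·f_v; that is, no nonzero integer multiple of f_v is a 2-coboundary. -/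

import Mathlib

open Matrix

noncomputable section

/-- The standard order-`M` rotation matrix on `ℤ²`, for `M ∈ {2,3,4,6}`. -/
def hRot (M : ℕ) : Matrix (Fin 2) (Fin 2) ℤ :=
  if M = 2 then !![-1, 0; 0, -1]
  else if M = 3 then !![0, 1; -1, -1]
  else if M = 4 then !![0, 1; -1, 0]
  else if M = 6 then !![0, 1; -1, 1]
  else 1

/-- The cross product `(x,y) × (x',y') = x y' − y x'` of integer vectors. -/
def crossZ (r r' : Fin 2 → ℤ) : ℤ := r 0 * r' 1 - r 1 * r' 0

/-- The underlying set `(ℝ/ℤ) × ℤ² × ℤ/M` of the magnetic space group. -/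
abbrev MagSp (M : ℕ) : Type := AddCircle (1 : ℝ) × (Fin 2 → ℤ) × ZMod M

/-- The magnetic space group operation. -/
def magSpMul (M : ℕ) (φ : ℝ) (g₁ g₂ : MagSp M) : MagSp M :=
  (g₁.1 + g₂.1 +
      (↑(φ / 2 * ((crossZ g₁.2.1 ((hRot M ^ (g₁.2.2).val).mulVec g₂.2.1) : ℤ) : ℝ)) :
        AddCircle (1 : ℝ)),
    g₁.2.1 + (hRot M ^ (g₁.2.2).val).mulVec g₂.2.1,
    g₁.2.2 + g₂.2.2)

/-- The representative in `[0,1)` of an element of `ℝ/ℤ`. -/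
def rep1 (z : AddCircle (1 : ℝ)) : ℝ :=
  haveI : Fact ((0 : ℝ) < 1) := ⟨one_pos⟩
  (AddCircle.equivIco 1 0 z : ℝ)

/-- The vison cocycle `f_v(g₁,g₂) = z₁ + z₂ + (φ/2)(r₁ × h^{j₁} r₂) − z₁₂`, in terms of the
representatives `z ∈ [0,1)` of the `U(1)`-components. -/
def fV (M : ℕ) (φ : ℝ) (g₁ g₂ : MagSp M) : ℝ :=
  rep1 g₁.1 + rep1 g₂.1 +
      φ / 2 * ((crossZ g₁.2.1 ((hRot M ^ (g₁.2.2).val).mulVec g₂.2.1) : ℤ) : ℝ) -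
    rep1 (magSpMul M φ g₁ g₂).1

/-! Writing `c(g₁,g₂) = (φ/2) (r₁ × h^{j₁} r₂)`, the `U(1)`-component of `g₁g₂` is
`z₁ + z₂ + c mod 1`, so `f_v` is the integer carry `rep z₁ + rep z₂ + c − rep z₁₂`. As `det h = 1`
and `h^M = 1`, `c` is a real 2-cocycle; hence the multiplication is associative, and in the
coboundary of `f_v` the representatives telescope, leaving the coboundary of `c`, which is `0`.

On the central `U(1)`, `f_v` restricts to the carry `rep z₁ + rep z₂ − rep (z₁ + z₂)`. If
`n f_v = dχ`, then `χ − n rep` is additive from `ℝ/ℤ` to `ℝ`, so it vanishes on the torsion point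
`1/(2n)`, i.e. `χ(1/(2n)) = n · fract (1/(2n)) ∈ 1/2 + ℤ`, which is not an integer.
-/

theorem rep1_coe (x : ℝ) : rep1 x = Int.fract x := by
  have : Fact ((0 : ℝ) < 1) := ⟨one_pos⟩
  simp [rep1, AddCircle.coe_equivIco_mk_apply]

theorem coe_rep1 (z : AddCircle (1 : ℝ)) : ((rep1 z : ℝ) : AddCircle (1 : ℝ)) = z := by
  have : Fact ((0 : ℝ) < 1) := ⟨one_pos⟩
  exact (AddCircle.equivIco 1 0).symm_apply_apply z

theorem exists_int_rep1_add_rep1_add_sub_rep1 (z₁ z₂ : AddCircle (1 : ℝ)) (c : ℝ) :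
    ∃ k : ℤ, rep1 z₁ + rep1 z₂ + c - rep1 (z₁ + z₂ + c) = k := by
  have hz : z₁ + z₂ + (c : AddCircle (1 : ℝ)) =
      ((rep1 z₁ + rep1 z₂ + c : ℝ) : AddCircle (1 : ℝ)) := by
    rw [AddCircle.coe_add, AddCircle.coe_add, coe_rep1, coe_rep1]
  exact ⟨_, by rw [hz, rep1_coe, Int.self_sub_fract]⟩

theorem crossZ_add_left (r r' s : Fin 2 → ℤ) : crossZ (r + r') s = crossZ r s + crossZ r' s := by
  simp only [crossZ, Pi.add_apply]; ring

theorem crossZ_add_right (r s s' : Fin 2 → ℤ) : crossZ r (s + s') = crossZ r s + crossZ r s' := by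
  simp only [crossZ, Pi.add_apply]; ring

theorem crossZ_mulVec_mulVec (A : Matrix (Fin 2) (Fin 2) ℤ) (r s : Fin 2 → ℤ) :
    crossZ (A *ᵥ r) (A *ᵥ s) = A.det * crossZ r s := by
  simp only [crossZ, mulVec, dotProduct, Fin.sum_univ_two, det_fin_two]
  ring

theorem crossZ_cocycle (A B : Matrix (Fin 2) (Fin 2) ℤ) (hA : A.det = 1) (r₁ r₂ r₃ : Fin 2 → ℤ) :
    crossZ r₂ (B *ᵥ r₃) - crossZ (r₁ + A *ᵥ r₂) ((A * B) *ᵥ r₃) +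
      crossZ r₁ (A *ᵥ (r₂ + B *ᵥ r₃)) - crossZ r₁ (A *ᵥ r₂) = 0 := by
  rw [← mulVec_mulVec, mulVec_add, crossZ_add_left, crossZ_add_right, crossZ_mulVec_mulVec, hA,
    one_mul]
  ring

theorem det_hRot (M : ℕ) : (hRot M).det = 1 := by
  unfold hRot
  split_ifs <;> simp [det_fin_two_of]

theorem hRot_pow_self (M : ℕ) : hRot M ^ M = 1 := by
  unfold hRot
  split_ifs <;> subst_vars
  all_goals first | exact one_pow _ | simp [one_fin_two, pow_succ]

theorem pow_val_add_of_pow_eq_one {G : Type*} [Monoid G] {a : G} {n : ℕ} [NeZero n]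
    (ha : a ^ n = 1) (j₁ j₂ : ZMod n) : a ^ (j₁ + j₂).val = a ^ j₁.val * a ^ j₂.val := by
  rw [ZMod.val_add, ← pow_eq_pow_mod _ ha, pow_add]

def magPhase (M : ℕ) (φ : ℝ) (g₁ g₂ : MagSp M) : ℝ :=
  φ / 2 * ((crossZ g₁.2.1 ((hRot M ^ (g₁.2.2).val).mulVec g₂.2.1) : ℤ) : ℝ)

theorem magSpMul_fst (M : ℕ) (φ : ℝ) (g₁ g₂ : MagSp M) :
    (magSpMul M φ g₁ g₂).1 = g₁.1 + g₂.1 + (magPhase M φ g₁ g₂ : AddCircle (1 : ℝ)) :=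
  rfl

theorem fV_eq (M : ℕ) (φ : ℝ) (g₁ g₂ : MagSp M) :
    fV M φ g₁ g₂ = rep1 g₁.1 + rep1 g₂.1 + magPhase M φ g₁ g₂ - rep1 (magSpMul M φ g₁ g₂).1 :=
  rfl

theorem magPhase_cocycle {M : ℕ} [NeZero M] (φ : ℝ) (g₁ g₂ g₃ : MagSp M) :
    magPhase M φ g₂ g₃ - magPhase M φ (magSpMul M φ g₁ g₂) g₃ +
      magPhase M φ g₁ (magSpMul M φ g₂ g₃) - magPhase M φ g₁ g₂ = 0 := by
  obtain ⟨z₁, r₁, j₁⟩ := g₁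
  obtain ⟨z₂, r₂, j₂⟩ := g₂
  obtain ⟨z₃, r₃, j₃⟩ := g₃
  have h := crossZ_cocycle (hRot M ^ j₁.val) (hRot M ^ j₂.val)
    (by rw [det_pow, det_hRot, one_pow]) r₁ r₂ r₃
  simp only [magPhase, magSpMul, pow_val_add_of_pow_eq_one (hRot_pow_self M)]
  have h' := congrArg (fun k : ℤ => (k : ℝ)) h
  push_cast at h'
  linear_combination φ / 2 * h'

theorem magSpMul_assoc {M : ℕ} [NeZero M] (φ : ℝ) (g₁ g₂ g₃ : MagSp M) :
    magSpMul M φ (magSpMul M φ g₁ g₂) g₃ = magSpMul M φ g₁ (magSpMul M φ g₂ g₃) := by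
  have hphase : magPhase M φ g₁ g₂ + magPhase M φ (magSpMul M φ g₁ g₂) g₃ =
      magPhase M φ g₂ g₃ + magPhase M φ g₁ (magSpMul M φ g₂ g₃) := by
    linarith [magPhase_cocycle φ g₁ g₂ g₃]
  refine Prod.ext ?_ (Prod.ext ?_ ?_)
  · simp only [magSpMul_fst]
    calc _ = g₁.1 + g₂.1 + g₃.1 + ((magPhase M φ g₁ g₂ +
            magPhase M φ (magSpMul M φ g₁ g₂) g₃ : ℝ) : AddCircle (1 : ℝ)) := by
          rw [AddCircle.coe_add]; abel
      _ = _ := by rw [hphase, AddCircle.coe_add]; abel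
  · simp only [magSpMul, pow_val_add_of_pow_eq_one (hRot_pow_self M), mulVec_add,
      ← mulVec_mulVec, add_assoc]
  · simp [magSpMul, add_assoc]

theorem fV_cocycle {M : ℕ} [NeZero M] (φ : ℝ) (g₁ g₂ g₃ : MagSp M) :
    fV M φ g₂ g₃ - fV M φ (magSpMul M φ g₁ g₂) g₃ + fV M φ g₁ (magSpMul M φ g₂ g₃) -
      fV M φ g₁ g₂ = 0 := by
  simp only [fV_eq, magSpMul_assoc]
  linarith [magPhase_cocycle φ g₁ g₂ g₃]

theorem magSpMul_zero_zero (M : ℕ) (φ : ℝ) (z₁ z₂ : AddCircle (1 : ℝ)) :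
    magSpMul M φ (z₁, 0, 0) (z₂, 0, 0) = (z₁ + z₂, 0, 0) := by
  simp [magSpMul, crossZ]

theorem fV_zero_zero (M : ℕ) (φ : ℝ) (z₁ z₂ : AddCircle (1 : ℝ)) :
    fV M φ (z₁, 0, 0) (z₂, 0, 0) = rep1 z₁ + rep1 z₂ - rep1 (z₁ + z₂) := by
  simp [fV_eq, magSpMul_fst, magPhase, crossZ]

theorem not_exists_int_coboundary_carry {n : ℤ} (hn : n ≠ 0) :
    ¬ ∃ χ : AddCircle (1 : ℝ) → ℤ, ∀ z₁ z₂,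
      (n : ℝ) * (rep1 z₁ + rep1 z₂ - rep1 (z₁ + z₂)) = χ z₂ - χ (z₁ + z₂) + χ z₁ := by
  rintro ⟨χ, hχ⟩
  let F : AddCircle (1 : ℝ) →+ ℝ :=
    AddMonoidHom.mk' (fun z => χ z - n * rep1 z) (fun z₁ z₂ => by linarith [hχ z₁ z₂])
  set x : ℝ := 1 / (2 * n)
  have htorsion : (2 * n) • (x : AddCircle (1 : ℝ)) = 0 := by
    have h2nx : ((2 * n : ℤ) : ℝ) * x = 1 := by
      simp only [x]
      push_cast
      field_simp
    rw [← AddCircle.coe_zsmul, zsmul_eq_mul, h2nx]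
    exact AddCircle.coe_period (p := (1 : ℝ))
  have hFx : F x = 0 := by
    have h := congrArg F htorsion
    rw [map_zsmul, map_zero, smul_eq_zero] at h
    exact h.resolve_left (by omega)
  have hχx : (2 * χ x : ℝ) = 1 - 2 * n * ⌊x⌋ := by
    simp only [F, AddMonoidHom.mk'_apply, rep1_coe, Int.fract, sub_eq_zero] at hFx
    rw [hFx]
    simp only [x]
    field_simp
  have hχx' : 2 * χ x = 1 - 2 * n * ⌊x⌋ := by exact_mod_cast hχx
  have h2 : (2 : ℤ) ∣ 1 := ⟨χ x + n * ⌊x⌋, by linarith⟩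
  norm_num at h2

/-- `f_v` is an integer-valued 2-cocycle on the magnetic space group, and no nonzero
integer multiple of it is the coboundary of a `ℤ`-valued function. -/
theorem vison_cocycle_is_integrally_nontrivial
    (M : ℕ) (hM : M ∈ ({2, 3, 4, 6} : Set ℕ)) (φ : ℝ) :
    (∀ g₁ g₂ : MagSp M, ∃ k : ℤ, fV M φ g₁ g₂ = k) ∧
    (∀ g₁ g₂ g₃ : MagSp M,
      fV M φ g₂ g₃ - fV M φ (magSpMul M φ g₁ g₂) g₃ + fV M φ g₁ (magSpMul M φ g₂ g₃) -
        fV M φ g₁ g₂ = 0) ∧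
    (∀ n : ℤ, n ≠ 0 →
      ¬ ∃ χ : MagSp M → ℤ, ∀ g₁ g₂ : MagSp M,
        (n : ℝ) * fV M φ g₁ g₂ =
          (χ g₂ : ℝ) - (χ (magSpMul M φ g₁ g₂) : ℝ) + (χ g₁ : ℝ)) := by
  have : NeZero M := ⟨by rintro rfl; simp at hM⟩
  refine ⟨fun g₁ g₂ => ?_, fV_cocycle φ, fun n hn ⟨χ, hχ⟩ => ?_⟩
  · rw [fV_eq, magSpMul_fst]
    exact exists_int_rep1_add_rep1_add_sub_rep1 _ _ _
  · refine not_exists_int_coboundary_carry hn ⟨fun z => χ (z, 0, 0), fun z₁ z₂ => ?_⟩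
    simpa [fV_zero_zero, magSpMul_zero_zero] using hχ (z₁, 0, 0) (z₂, 0, 0)
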